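/- arXiv:math/0006069 — 2 statements merged into one kernel-verified Lean document; each statement's English description precedes it below -/
import Mathlib

section
/- For every matrix A ∈ 𝔸, the set of left eigenvectors of A is exactly 𝕍 ∖ {0}: a nonzero vector v = (x, y)ᵀ ∈ 𝕆² satisfies Av = λv for some λ ∈ 𝕆 if and only if |x|² = |y|² and x·y = 0. In particular, all matrices in 𝔸 have the same set of left eigenvectors. -/
noncomputable section

open scoped BigOperators Matrix

/-- The octonions `𝕆`, realized as the Cayley–Dickson double of the quaternions. -/
def Oct : Type := Quaternion ℝ × Quaternion ℝ

namespace Oct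

instance : AddCommGroup Oct := inferInstanceAs (AddCommGroup (Quaternion ℝ × Quaternion ℝ))
instance : Module ℝ Oct := inferInstanceAs (Module ℝ (Quaternion ℝ × Quaternion ℝ))

instance : One Oct := ⟨((1 : Quaternion ℝ), (0 : Quaternion ℝ))⟩

/-- Cayley–Dickson multiplication on `ℍ × ℍ`:
`(a, b) * (c, d) = (a c − d̄ b, d a + b c̄)`. -/
instance : Mul Oct :=
  ⟨fun x y => (x.1 * y.1 - star y.2 * x.2, y.2 * x.1 + x.2 * star y.1)⟩

theorem mul_def (x y : Oct) :
    x * y = (x.1 * y.1 - star y.2 * x.2, y.2 * x.1 + x.2 * star y.1) := rfl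

@[simp] theorem fst_zero : (0 : Oct).1 = 0 := rfl
@[simp] theorem snd_zero : (0 : Oct).2 = 0 := rfl
@[simp] theorem fst_one : (1 : Oct).1 = 1 := rfl
@[simp] theorem snd_one : (1 : Oct).2 = 0 := rfl
@[simp] theorem fst_add (x y : Oct) : (x + y).1 = x.1 + y.1 := rfl
@[simp] theorem snd_add (x y : Oct) : (x + y).2 = x.2 + y.2 := rfl

instance : NonAssocRing Oct :=
  { (inferInstance : AddCommGroup Oct), (inferInstance : One Oct), (inferInstance : Mul Oct) with
    left_distrib := by
      intro x y z
      refine Prod.ext ?_ ?_ <;> simp only [fst_add, snd_add] <;>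
        simp only [mul_def, fst_add, snd_add, star_add] <;> noncomm_ring
    right_distrib := by
      intro x y z
      refine Prod.ext ?_ ?_ <;> simp only [fst_add, snd_add] <;>
        simp only [mul_def, fst_add, snd_add, star_add] <;> noncomm_ring
    zero_mul := by
      intro x
      refine Prod.ext ?_ ?_ <;> simp [mul_def]
    mul_zero := by
      intro x
      refine Prod.ext ?_ ?_ <;> simp [mul_def]
    one_mul := by
      intro x
      refine Prod.ext ?_ ?_ <;> simp [mul_def]
    mul_one := by
      intro x
      refine Prod.ext ?_ ?_ <;> simp [mul_def] }

/-- Octonionic conjugation `a ↦ ā`. -/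
def conj (x : Oct) : Oct := (star x.1, -x.2)

/-- The canonical embedding of `ℝ` into `𝕆`. -/
def oR (r : ℝ) : Oct := r • (1 : Oct)

/-- Real part `Re(a) = (a + ā)/2`, as an octonion. -/
def re (x : Oct) : Oct := (2 : ℝ)⁻¹ • (x + conj x)

/-- Imaginary part `Im(a) = (a − ā)/2`, as an octonion. -/
def im (x : Oct) : Oct := (2 : ℝ)⁻¹ • (x - conj x)

/-- The coefficient of `1` in an octonion (real-part coefficient). -/
def reCoeff (x : Oct) : ℝ := x.1.re

/-- Inner product `a·b = (a b̄ + b ā)/2`, a real octonion. -/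
def dot (a b : Oct) : Oct := (2 : ℝ)⁻¹ • (a * conj b + b * conj a)

/-- Norm `|a| = √(a ā)`. -/
def onorm (a : Oct) : ℝ := Real.sqrt (reCoeff (a * conj a))

/-- Octonionic associator `[a,b,c] = (ab)c − a(bc)`. -/
def assoc (a b c : Oct) : Oct := a * b * c - a * (b * c)

/-- The general 2×2 octonionic Hermitian matrix `[[p, a], [ā, m]]`. -/
def herm2 (p m : ℝ) (a : Oct) : Matrix (Fin 2) (Fin 2) Oct := !![oR p, a; conj a, oR m]

/-- `J(r̂) = [[0, −r̂], [r̂, 0]]`. -/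
def J (r : Oct) : Matrix (Fin 2) (Fin 2) Oct := !![0, -r; r, 0]

/-- The set `𝔸` of matrices `p I + q J(r̂)` with `p, q ∈ ℝ`, `q ≠ 0`,
and `r̂` a pure imaginary unit octonion (equivalently `r̂ ² = −1`). -/
def memA (A : Matrix (Fin 2) (Fin 2) Oct) : Prop :=
  ∃ (p q : ℝ) (r : Oct), q ≠ 0 ∧ r * r = -1 ∧
    A = p • (1 : Matrix (Fin 2) (Fin 2) Oct) + q • J r

/-- The set `𝕍` of vectors `(x, y)ᵀ ∈ 𝕆²` with `|x|² = |y|²` and `x·y = 0`. -/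
def memV (v : Fin 2 → Oct) : Prop :=
  onorm (v 0) ^ 2 = onorm (v 1) ^ 2 ∧ dot (v 0) (v 1) = 0

/-- The general 3×3 octonionic Hermitian matrix `[[p, a, b̄], [ā, m, c], [b, c̄, n]]`. -/
def herm3 (p m n : ℝ) (a b c : Oct) : Matrix (Fin 3) (Fin 3) Oct :=
  !![oR p, a, conj b; conj a, oR m, c; b, conj c, oR n]

/-- Vector associator `[U,V,W] = (U V†) W − U (V† W)`. -/
def vAssoc {n : ℕ} (U V W : Fin n → Oct) : Fin n → Oct :=
  fun i => (∑ j, (U i * conj (V j)) * W j) - U i * (∑ j, conj (V j) * W j)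

/-- Outer product `U V†`, the matrix with `(i,j)` entry `U_i V̄_j`. -/
def outer {n : ℕ} (U V : Fin n → Oct) : Matrix (Fin n) (Fin n) Oct :=
  Matrix.of fun i j => U i * conj (V j)

/-- `Ã = A − (tr A) I`. -/
def tilde {n : ℕ} (A : Matrix (Fin n) (Fin n) Oct) : Matrix (Fin n) (Fin n) Oct :=
  A - Matrix.of fun i j => if i = j then Matrix.trace A else 0

end Oct

open Oct

namespace OctAux
open Oct Quaternion

@[simp] theorem fst_smul (s : ℝ) (x : Oct) : (s • x).1 = s • x.1 := rfl
@[simp] theorem snd_smul (s : ℝ) (x : Oct) : (s • x).2 = s • x.2 := rfl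
@[simp] theorem fst_neg (x : Oct) : (-x).1 = -x.1 := rfl
@[simp] theorem snd_neg (x : Oct) : (-x).2 = -x.2 := rfl
@[simp] theorem fst_sub (x y : Oct) : (x - y).1 = x.1 - y.1 := rfl
@[simp] theorem snd_sub (x y : Oct) : (x - y).2 = x.2 - y.2 := rfl
theorem fst_mul (x y : Oct) : (x * y).1 = x.1 * y.1 - star y.2 * x.2 := rfl
theorem snd_mul (x y : Oct) : (x * y).2 = y.2 * x.1 + x.2 * star y.1 := rfl
theorem fst_conj (x : Oct) : (conj x).1 = star x.1 := rfl
theorem snd_conj (x : Oct) : (conj x).2 = -x.2 := rfl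

/-- The (squared) octonionic norm. -/
def N (x : Oct) : ℝ := normSq x.1 + normSq x.2

/-- The real inner product on `Oct`. -/
def ip (a b : Oct) : ℝ :=
  a.1.re * b.1.re + a.1.imI * b.1.imI + a.1.imJ * b.1.imJ + a.1.imK * b.1.imK +
  a.2.re * b.2.re + a.2.imI * b.2.imI + a.2.imJ * b.2.imJ + a.2.imK * b.2.imK

theorem N_nonneg (x : Oct) : 0 ≤ N x := add_nonneg normSq_nonneg normSq_nonneg

theorem N_eq_zero {x : Oct} : N x = 0 ↔ x = 0 := by
  rw [N, add_eq_zero_iff_of_nonneg normSq_nonneg normSq_nonneg, normSq_eq_zero, normSq_eq_zero]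
  exact (Prod.ext_iff (α := Quaternion ℝ) (β := Quaternion ℝ) (x := x) (y := 0)).symm

set_option maxHeartbeats 1000000 in
theorem N_neg_one : N (-1 : Oct) = 1 := by
  show normSq (-1 : Quaternion ℝ) + normSq (-0 : Quaternion ℝ) = 1
  simp [Quaternion.normSq_neg]

theorem N_mul (x y : Oct) : N (x * y) = N x * N y := by
  show normSq (x.1 * y.1 - star y.2 * x.2) + normSq (y.2 * x.1 + x.2 * star y.1)
      = (normSq x.1 + normSq x.2) * (normSq y.1 + normSq y.2)
  simp only [normSq_def', Quaternion.re_mul, Quaternion.imI_mul, Quaternion.imJ_mul,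
    Quaternion.imK_mul, Quaternion.re_sub, Quaternion.imI_sub, Quaternion.imJ_sub,
    Quaternion.imK_sub, Quaternion.re_add, Quaternion.imI_add, Quaternion.imJ_add,
    Quaternion.imK_add, Quaternion.re_star, Quaternion.imI_star, Quaternion.imJ_star,
    Quaternion.imK_star]
  ring

theorem N_smul (s : ℝ) (x : Oct) : N (s • x) = s ^ 2 * N x := by
  simp [N, normSq_smul, mul_add]

theorem polar (a b : Oct) : N (a + b) = N a + N b + 2 * ip a b := by
  simp only [N, ip, normSq_def', Oct.fst_add, Oct.snd_add, Quaternion.re_add,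
    Quaternion.imI_add, Quaternion.imJ_add, Quaternion.imK_add]
  ring

theorem ip_symm (a b : Oct) : ip a b = ip b a := by simp only [ip]; ring

theorem ip_smul_left (s : ℝ) (a b : Oct) : ip (s • a) b = s * ip a b := by
  simp only [ip, fst_smul, snd_smul, Quaternion.re_smul, Quaternion.imI_smul,
    Quaternion.imJ_smul, Quaternion.imK_smul, smul_eq_mul]
  ring

theorem ip_smul_right (s : ℝ) (a b : Oct) : ip a (s • b) = s * ip a b := by
  rw [ip_symm, ip_smul_left, ip_symm]

theorem ip_mul_left (a b c : Oct) : ip (a * b) (a * c) = N a * ip b c := by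
  have h1 := polar (a * b) (a * c)
  rw [← mul_add, N_mul, polar b c] at h1
  have h2 := N_mul a b
  have h3 := N_mul a c
  nlinarith [h1, h2, h3]

theorem smul_mul (s : ℝ) (a b : Oct) : (s • a) * b = s • (a * b) := by
  refine Prod.ext ?_ ?_ <;>
    simp [fst_mul, snd_mul, smul_sub, smul_add, mul_smul_comm, smul_mul_assoc]

theorem mul_smul' (s : ℝ) (a b : Oct) : a * (s • b) = s • (a * b) := by
  refine Prod.ext ?_ ?_ <;>
    simp [fst_mul, snd_mul, smul_sub, smul_add, mul_smul_comm, smul_mul_assoc, Quaternion.star_smul]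

theorem oR_mul (s : ℝ) (x : Oct) : oR s * x = s • x := by
  rw [oR, smul_mul, one_mul]

theorem one_ne_zero' : (1 : Oct) ≠ 0 := by
  intro h
  exact one_ne_zero (congrArg (fun z : Oct => z.1.re) h)

set_option maxHeartbeats 1000000 in
theorem mul_conj_mul (a x : Oct) : (a * conj x) * x = N x • a := by
  refine Prod.ext ?_ ?_ <;>
  · ext <;>
    · simp only [fst_mul, snd_mul, fst_conj, snd_conj, N, normSq_def', fst_smul, snd_smul,
        Quaternion.re_mul, Quaternion.imI_mul, Quaternion.imJ_mul, Quaternion.imK_mul,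
        Quaternion.re_sub, Quaternion.imI_sub, Quaternion.imJ_sub, Quaternion.imK_sub,
        Quaternion.re_add, Quaternion.imI_add, Quaternion.imJ_add, Quaternion.imK_add,
        Quaternion.re_star, Quaternion.imI_star, Quaternion.imJ_star, Quaternion.imK_star,
        Quaternion.re_neg, Quaternion.imI_neg, Quaternion.imJ_neg, Quaternion.imK_neg,
        Quaternion.re_smul, Quaternion.imI_smul, Quaternion.imJ_smul, Quaternion.imK_smul,
        smul_eq_mul]
      ring

set_option maxHeartbeats 1000000 in
theorem mul_mul_conj (a b : Oct) : (a * b) * conj b = N b • a := by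
  refine Prod.ext ?_ ?_ <;>
  · ext <;>
    · simp only [fst_mul, snd_mul, fst_conj, snd_conj, N, normSq_def', fst_smul, snd_smul,
        Quaternion.re_mul, Quaternion.imI_mul, Quaternion.imJ_mul, Quaternion.imK_mul,
        Quaternion.re_sub, Quaternion.imI_sub, Quaternion.imJ_sub, Quaternion.imK_sub,
        Quaternion.re_add, Quaternion.imI_add, Quaternion.imJ_add, Quaternion.imK_add,
        Quaternion.re_star, Quaternion.imI_star, Quaternion.imJ_star, Quaternion.imK_star,
        Quaternion.re_neg, Quaternion.imI_neg, Quaternion.imJ_neg, Quaternion.imK_neg,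
        Quaternion.re_smul, Quaternion.imI_smul, Quaternion.imJ_smul, Quaternion.imK_smul,
        smul_eq_mul]
      ring

set_option maxHeartbeats 2000000 in
theorem lin_id (a x y : Oct) :
    (a * conj x) * y + (a * conj y) * x = (2 * ip x y) • a := by
  refine Prod.ext ?_ ?_ <;>
  · ext <;>
    · simp only [fst_mul, snd_mul, fst_conj, snd_conj, ip, Oct.fst_add, Oct.snd_add, fst_smul, snd_smul,
        Quaternion.re_mul, Quaternion.imI_mul, Quaternion.imJ_mul, Quaternion.imK_mul,
        Quaternion.re_sub, Quaternion.imI_sub, Quaternion.imJ_sub, Quaternion.imK_sub,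
        Quaternion.re_add, Quaternion.imI_add, Quaternion.imJ_add, Quaternion.imK_add,
        Quaternion.re_star, Quaternion.imI_star, Quaternion.imJ_star, Quaternion.imK_star,
        Quaternion.re_neg, Quaternion.imI_neg, Quaternion.imJ_neg, Quaternion.imK_neg,
        Quaternion.re_smul, Quaternion.imI_smul, Quaternion.imJ_smul, Quaternion.imK_smul,
        smul_eq_mul]
      ring

theorem dot_eq (a b : Oct) : dot a b = ip a b • (1 : Oct) := by
  refine Prod.ext ?_ ?_ <;>
  · ext <;>
    · simp only [Oct.dot, fst_mul, snd_mul, fst_conj, snd_conj, ip, Oct.fst_add, Oct.snd_add, fst_smul, snd_smul,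
        Oct.fst_one, Oct.snd_one,
        Quaternion.re_mul, Quaternion.imI_mul, Quaternion.imJ_mul, Quaternion.imK_mul,
        Quaternion.re_sub, Quaternion.imI_sub, Quaternion.imJ_sub, Quaternion.imK_sub,
        Quaternion.re_add, Quaternion.imI_add, Quaternion.imJ_add, Quaternion.imK_add,
        Quaternion.re_star, Quaternion.imI_star, Quaternion.imJ_star, Quaternion.imK_star,
        Quaternion.re_neg, Quaternion.imI_neg, Quaternion.imJ_neg, Quaternion.imK_neg,
        Quaternion.re_smul, Quaternion.imI_smul, Quaternion.imJ_smul, Quaternion.imK_smul,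
        Quaternion.re_one, Quaternion.imI_one, Quaternion.imJ_one, Quaternion.imK_one,
        Quaternion.re_zero, Quaternion.imI_zero, Quaternion.imJ_zero, Quaternion.imK_zero,
        smul_eq_mul]
      ring

theorem onorm_sq (a : Oct) : onorm a ^ 2 = N a := by
  have h : reCoeff (a * conj a) = N a := by
    simp only [Oct.reCoeff, fst_mul, snd_mul, fst_conj, snd_conj, N, normSq_def',
      Quaternion.re_mul, Quaternion.re_sub, Quaternion.re_star, Quaternion.imI_star,
      Quaternion.imJ_star, Quaternion.imK_star, Quaternion.re_neg, Quaternion.imI_neg,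
      Quaternion.imJ_neg, Quaternion.imK_neg, Quaternion.re_add]
    ring
  rw [Oct.onorm, h, Real.sq_sqrt (N_nonneg a)]

end OctAux

open OctAux

set_option maxHeartbeats 1000000 in
/-- For every `A ∈ 𝔸`, a nonzero `v ∈ 𝕆²` is a left eigenvector of `A`
if and only if `v ∈ 𝕍`; in particular all matrices in `𝔸` have the same left
eigenvectors. -/
theorem stmt_1 (A : Matrix (Fin 2) (Fin 2) Oct) (hA : memA A)
    (v : Fin 2 → Oct) (hv : v ≠ 0) :
    (∃ lam : Oct, A.mulVec v = fun i => lam * v i) ↔ memV v := by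
  obtain ⟨p, q, r, hq, hr, rfl⟩ := hA
  set x := v 0 with hx
  set y := v 1 with hy
  have hNr : N r = 1 := by
    have h1 : N r * N r = 1 := by
      rw [← N_mul, hr, N_neg_one]
    nlinarith [N_nonneg r]
  have key : ∀ lam : Oct,
      ((p • (1 : Matrix (Fin 2) (Fin 2) Oct) + q • J r).mulVec v = fun i => lam * v i) ↔
      ((lam - oR p) * x = (-q) • (r * y) ∧ (lam - oR p) * y = q • (r * x)) := by
    intro lam
    rw [funext_iff, Fin.forall_fin_two]
    have e0 : (p • (1 : Matrix (Fin 2) (Fin 2) Oct) + q • J r).mulVec v 0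
        = p • x + (-q) • (r * y) := by
      simp [Matrix.mulVec, dotProduct, Fin.sum_univ_two, J, Matrix.one_apply,
        smul_mul, mul_smul', neg_smul, neg_mul, smul_neg, ← hx, ← hy]
    have e1 : (p • (1 : Matrix (Fin 2) (Fin 2) Oct) + q • J r).mulVec v 1
        = p • y + q • (r * x) := by
      simp [Matrix.mulVec, dotProduct, Fin.sum_univ_two, J, Matrix.one_apply,
        smul_mul, mul_smul', neg_smul, neg_mul, smul_neg, ← hx, ← hy]
      abel
    rw [e0, e1, sub_mul, sub_mul, ← oR_mul p x, ← oR_mul p y]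
    constructor
    · rintro ⟨h0, h1⟩
      constructor
      · rw [← h0]; abel
      · rw [← h1]; abel
    · rintro ⟨h0, h1⟩
      constructor
      · rw [sub_eq_iff_eq_add] at h0; rw [h0]; abel
      · rw [sub_eq_iff_eq_add] at h1; rw [h1]; abel
  have hv01 : x ≠ 0 ∨ y ≠ 0 := by
    by_contra h
    push_neg at h
    apply hv
    funext i
    fin_cases i
    · exact h.1
    · exact h.2
  constructor
  · rintro ⟨lam, hl⟩
    rw [key lam] at hl
    obtain ⟨h1, h2⟩ := hl
    set μ := lam - oR p with hμ
    have hN1 : N μ * N x = q ^ 2 * N y := by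
      have := congrArg N h1
      rw [N_mul, N_smul, N_mul, hNr, one_mul] at this
      nlinarith [this]
    have hN2 : N μ * N y = q ^ 2 * N x := by
      have := congrArg N h2
      rw [N_mul, N_smul, N_mul, hNr, one_mul] at this
      nlinarith [this]
    have hx0 : N x ≠ 0 := by
      intro h0
      have hxz : x = 0 := N_eq_zero.mp h0
      have hyz : N y = 0 := by
        have hq2 : q ^ 2 ≠ 0 := pow_ne_zero 2 hq
        have : q ^ 2 * N y = 0 := by rw [← hN1, h0, mul_zero]
        exact (mul_eq_zero.mp this).resolve_left hq2
      rcases hv01 with h | h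
      · exact h hxz
      · exact h (N_eq_zero.mp hyz)
    have hNμ : N μ = q ^ 2 := by
      have hsq : (N μ) ^ 2 * N x = (q ^ 2) ^ 2 * N x := by
        calc (N μ) ^ 2 * N x = N μ * (N μ * N x) := by ring
          _ = N μ * (q ^ 2 * N y) := by rw [hN1]
          _ = q ^ 2 * (N μ * N y) := by ring
          _ = q ^ 2 * (q ^ 2 * N x) := by rw [hN2]
          _ = (q ^ 2) ^ 2 * N x := by ring
      have : (N μ) ^ 2 = (q ^ 2) ^ 2 := mul_right_cancel₀ hx0 hsq
      nlinarith [N_nonneg μ, sq_nonneg q, this]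
    have hNxy : N x = N y := by
      have hq2 : q ^ 2 ≠ 0 := pow_ne_zero 2 hq
      rw [hNμ] at hN1
      exact mul_left_cancel₀ hq2 hN1
    have hip : ip x y = 0 := by
      have hh : N μ * ip x y = ip (μ * x) (μ * y) := (ip_mul_left μ x y).symm
      rw [h1, h2, ip_smul_left, ip_smul_right, ip_mul_left, hNr, one_mul,
        ip_symm y x, hNμ] at hh
      have hq2 : (0:ℝ) < q ^ 2 := by positivity
      nlinarith [hh]
    constructor
    · rw [onorm_sq, onorm_sq]; exact hNxy
    · rw [dot_eq, hip, zero_smul]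
  · rintro ⟨hno, hdo⟩
    have hNxy : N x = N y := by rwa [onorm_sq, onorm_sq] at hno
    have hip : ip x y = 0 := by
      rw [dot_eq] at hdo
      rcases smul_eq_zero.mp hdo with h | h
      · exact h
      · exact absurd h one_ne_zero'
    have hx0 : N x ≠ 0 := by
      intro h0
      apply hv
      funext i
      fin_cases i
      · exact N_eq_zero.mp h0
      · exact N_eq_zero.mp (hNxy ▸ h0)
    refine ⟨oR p + (-(q * (N x)⁻¹)) • ((r * y) * conj x), ?_⟩
    rw [key]
    have hμ : oR p + (-(q * (N x)⁻¹)) • ((r * y) * conj x) - oR p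
        = (-(q * (N x)⁻¹)) • ((r * y) * conj x) := by abel
    rw [hμ]
    constructor
    · rw [smul_mul, mul_conj_mul, smul_smul]
      congr 1
      field_simp
    · rw [smul_mul]
      have hl : ((r * y) * conj x) * y = (2 * ip x y) • (r * y) - ((r * y) * conj y) * x := by
        rw [← lin_id (r * y) x y]; abel
      rw [hl, hip, mul_zero, zero_smul, zero_sub, mul_mul_conj, smul_mul, smul_neg, smul_smul,
        ← neg_smul]
      congr 1
      rw [← hNxy]
      field_simp
end
end

section
/- Let A = [[p, a],[ā, m]] be a 2×2 octonionic Hermitian matrix and suppose Av = vλ with v = (x, y)ᵀ, x ≠ 0 and y ≠ 0. Then λ satisfies the generalized characteristic equation λ² − λ(tr A) + det A = [ā, x, y](λ − p)/|y|² = [a, y, x](λ − m)/|x|². -/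
noncomputable section

open scoped BigOperators Matrix

open Oct

namespace Oct

@[simp] theorem fst_smul' (r : ℝ) (x : Oct) : (r • x).1 = r • x.1 := rfl
@[simp] theorem snd_smul' (r : ℝ) (x : Oct) : (r • x).2 = r • x.2 := rfl
@[simp] theorem fst_neg' (x : Oct) : (-x).1 = -x.1 := rfl
@[simp] theorem snd_neg' (x : Oct) : (-x).2 = -x.2 := rfl
@[simp] theorem fst_sub' (x y : Oct) : (x - y).1 = x.1 - y.1 := rfl
@[simp] theorem snd_sub' (x y : Oct) : (x - y).2 = x.2 - y.2 := rfl

theorem conj_add' (x y : Oct) : conj (x + y) = conj x + conj y := by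
  refine Prod.ext ?_ ?_
  · show star (x.1 + y.1) = star x.1 + star y.1; exact star_add _ _
  · show -(x.2 + y.2) = -x.2 + -y.2; exact neg_add _ _

theorem conj_sub' (x y : Oct) : conj (x - y) = conj x - conj y := by
  refine Prod.ext ?_ ?_
  · show star (x.1 - y.1) = star x.1 - star y.1; exact star_sub _ _
  · show -(x.2 - y.2) = -x.2 - -y.2; abel

theorem smul_mul' (r : ℝ) (x y : Oct) : (r • x) * y = r • (x * y) := by
  refine Prod.ext ?_ ?_
  · show (r • x.1) * y.1 - star y.2 * (r • x.2) = r • (x.1 * y.1 - star y.2 * x.2)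
    simp [smul_sub, mul_smul_comm, smul_mul_assoc]
  · show y.2 * (r • x.1) + (r • x.2) * star y.1 = r • (y.2 * x.1 + x.2 * star y.1)
    simp [smul_add, mul_smul_comm, smul_mul_assoc]

theorem mul_smul'' (r : ℝ) (x y : Oct) : x * (r • y) = r • (x * y) := by
  refine Prod.ext ?_ ?_
  · show x.1 * (r • y.1) - star (r • y.2) * x.2 = r • (x.1 * y.1 - star y.2 * x.2)
    simp [smul_sub, mul_smul_comm, smul_mul_assoc, star_smul]
  · show (r • y.2) * x.1 + x.2 * star (r • y.1) = r • (y.2 * x.1 + x.2 * star y.1)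
    simp [smul_add, mul_smul_comm, smul_mul_assoc, star_smul]

theorem oR_mul' (r : ℝ) (x : Oct) : oR r * x = r • x := by
  rw [oR, smul_mul', one_mul]

theorem mul_oR' (x : Oct) (r : ℝ) : x * oR r = r • x := by
  rw [oR, mul_smul'', mul_one]

theorem oR_mul_oR (r s : ℝ) : oR r * oR s = oR (r * s) := by
  rw [oR_mul', oR, oR, smul_smul]

theorem smul_oR (r s : ℝ) : r • oR s = oR (r * s) := by
  rw [oR, oR, smul_smul]

theorem oR_add' (r s : ℝ) : oR (r + s) = oR r + oR s := by
  rw [oR, oR, oR, add_smul]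

theorem oR_sub' (r s : ℝ) : oR (r - s) = oR r - oR s := by
  rw [oR, oR, oR, sub_smul]

theorem conj_conj' (x : Oct) : conj (conj x) = x := by
  refine Prod.ext ?_ ?_ <;> simp [conj]

theorem conj_smul' (r : ℝ) (x : Oct) : conj (r • x) = r • conj x := by
  refine Prod.ext ?_ ?_
  · show star (r • x.1) = r • star x.1; simp [star_smul]
  · show -(r • x.2) = r • -x.2; simp

theorem conj_one' : conj (1 : Oct) = 1 := by
  refine Prod.ext ?_ ?_ <;> simp [conj] <;> rfl

theorem conj_oR' (r : ℝ) : conj (oR r) = oR r := by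
  rw [oR, conj_smul', conj_one']

theorem conj_mul' (x y : Oct) : conj (x * y) = conj y * conj x := by
  refine Prod.ext ?_ ?_
  · show star (x.1 * y.1 - star y.2 * x.2) = star y.1 * star x.1 - star (-x.2) * (-y.2)
    simp [star_mul, star_sub, star_add] <;> abel
  · show -(y.2 * x.1 + x.2 * star y.1) = -x.2 * star y.1 + -y.2 * star (star x.1)
    simp [star_mul, star_sub, star_add] <;> abel

/-- trace of an octonion -/
def otr (x : Oct) : ℝ := 2 * x.1.re

/-- squared norm coefficient of an octonion -/
def Nc (x : Oct) : ℝ := Quaternion.normSq x.1 + Quaternion.normSq x.2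

theorem self_add_conj' (x : Oct) : x + conj x = oR (otr x) := by
  refine Prod.ext ?_ ?_
  · show x.1 + star x.1 = (2 * x.1.re) • (1 : Quaternion ℝ)
    rw [Quaternion.self_add_star', ← Quaternion.coe_one, Quaternion.smul_coe, mul_one]
  · show x.2 + -x.2 = (2 * x.1.re) • (0 : Quaternion ℝ)
    simp

theorem conj_eq' (x : Oct) : conj x = oR (otr x) - x := by
  rw [← self_add_conj' x]; abel

theorem fst_conj' (x : Oct) : (conj x).1 = star x.1 := rfl
theorem snd_conj' (x : Oct) : (conj x).2 = -x.2 := rfl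
theorem fst_mul' (x y : Oct) : (x * y).1 = x.1 * y.1 - star y.2 * x.2 := rfl
theorem snd_mul' (x y : Oct) : (x * y).2 = y.2 * x.1 + x.2 * star y.1 := rfl

theorem KA1 (x z : Oct) : conj x * (x * z) = Nc x • z := by
  refine Prod.ext ?_ ?_ <;>
    simp only [fst_mul', snd_mul', fst_conj', snd_conj', Nc, fst_smul', snd_smul', star_add, star_mul, star_neg,
      star_star, neg_mul, mul_neg, neg_neg, sub_eq_add_neg, add_mul, mul_add, neg_add]
  all_goals generalize x.1 = a; generalize x.2 = b; generalize z.1 = c; generalize z.2 = d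
  · rw [← mul_assoc (star a) a c, Quaternion.star_mul_self, Quaternion.coe_mul_eq_smul,
      ← mul_assoc (star a) (star d) b, mul_assoc c (star b) b, Quaternion.star_mul_self,
      Quaternion.mul_coe_eq_smul]
    show _ = (Quaternion.normSq a + Quaternion.normSq b) • c
    rw [add_smul]; abel
  · rw [mul_assoc d a (star a), Quaternion.self_mul_star, Quaternion.mul_coe_eq_smul,
      mul_assoc b (star c) (star a), ← mul_assoc b (star b) d, Quaternion.self_mul_star,
      Quaternion.coe_mul_eq_smul]
    show _ = (Quaternion.normSq a + Quaternion.normSq b) • d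
    rw [add_smul]; abel

theorem KA2 (z x : Oct) : (z * x) * conj x = Nc x • z := by
  refine Prod.ext ?_ ?_ <;>
    simp only [fst_mul', snd_mul', fst_conj', snd_conj', Nc, fst_smul', snd_smul', star_add, star_mul, star_neg,
      star_star, neg_mul, mul_neg, neg_neg, sub_eq_add_neg, add_mul, mul_add, neg_add]
  all_goals generalize x.1 = a; generalize x.2 = b; generalize z.1 = c; generalize z.2 = d
  · rw [mul_assoc c a (star a), Quaternion.self_mul_star, Quaternion.mul_coe_eq_smul,
      ← mul_assoc (star b) d (star a), ← mul_assoc (star b) b c, Quaternion.star_mul_self,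
      Quaternion.coe_mul_eq_smul]
    show _ = (Quaternion.normSq a + Quaternion.normSq b) • c
    rw [add_smul]; abel
  · rw [← mul_assoc b c a, ← mul_assoc b (star b) d, mul_assoc d (star a) a,
      Quaternion.star_mul_self, Quaternion.mul_coe_eq_smul, Quaternion.self_mul_star,
      Quaternion.coe_mul_eq_smul]
    show _ = (Quaternion.normSq a + Quaternion.normSq b) • d
    rw [add_smul]; abel

theorem conj_mul_self' (x : Oct) : conj x * x = oR (Nc x) := by
  have h := KA1 x 1
  rwa [mul_one, ← oR] at h

theorem mul_conj_self' (x : Oct) : x * conj x = oR (Nc x) := by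
  have h := KA2 1 x
  rwa [one_mul, ← oR] at h

theorem reCoeff_oR (r : ℝ) : reCoeff (oR r) = r := by
  show ((r • (1 : Oct)).1).re = r
  show (r • (1 : Quaternion ℝ)).re = r
  simp [Quaternion.re_one]

theorem Nc_conj (x : Oct) : Nc (conj x) = Nc x := by
  simp [Nc, conj, Quaternion.normSq_star, Quaternion.normSq_neg]

theorem onorm_sq (x : Oct) : onorm x ^ 2 = Nc x := by
  rw [onorm, mul_conj_self', reCoeff_oR]
  refine Real.sq_sqrt ?_
  have := Quaternion.normSq_nonneg (a := x.1)
  have := Quaternion.normSq_nonneg (a := x.2)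
  unfold Nc; positivity

theorem Nc_ne_zero {x : Oct} (hx : x ≠ 0) : Nc x ≠ 0 := by
  intro h
  apply hx
  have n1 := Quaternion.normSq_nonneg (a := x.1)
  have n2 := Quaternion.normSq_nonneg (a := x.2)
  have e1 : x.1 = 0 := by
    rw [← Quaternion.normSq_eq_zero]; unfold Nc at h; linarith
  have e2 : x.2 = 0 := by
    rw [← Quaternion.normSq_eq_zero]; unfold Nc at h; linarith
  exact Prod.ext e1 e2

theorem assoc_add₁ (a a' b c : Oct) :
    assoc (a + a') b c = assoc a b c + assoc a' b c := by
  simp only [assoc, add_mul]; abel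

theorem assoc_add₂ (a b b' c : Oct) :
    assoc a (b + b') c = assoc a b c + assoc a b' c := by
  simp only [assoc, add_mul, mul_add]; abel

theorem assoc_add₃ (a b c c' : Oct) :
    assoc a b (c + c') = assoc a b c + assoc a b c' := by
  simp only [assoc, mul_add]; abel

theorem assoc_sub₁ (a a' b c : Oct) :
    assoc (a - a') b c = assoc a b c - assoc a' b c := by
  simp only [assoc, sub_mul]; abel

theorem assoc_sub₂ (a b b' c : Oct) :
    assoc a (b - b') c = assoc a b c - assoc a b' c := by
  simp only [assoc, sub_mul, mul_sub]; abel

theorem assoc_sub₃ (a b c c' : Oct) :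
    assoc a b (c - c') = assoc a b c - assoc a b c' := by
  simp only [assoc, mul_sub]; abel

theorem assoc_smul₁ (r : ℝ) (a b c : Oct) :
    assoc (r • a) b c = r • assoc a b c := by
  simp only [assoc, smul_mul', smul_sub]

theorem assoc_smul₂ (r : ℝ) (a b c : Oct) :
    assoc a (r • b) c = r • assoc a b c := by
  simp only [assoc, smul_mul', mul_smul'', smul_sub]

theorem assoc_smul₃ (r : ℝ) (a b c : Oct) :
    assoc a b (r • c) = r • assoc a b c := by
  simp only [assoc, mul_smul'', smul_sub]

theorem assoc_oR₁ (r : ℝ) (b c : Oct) : assoc (oR r) b c = 0 := by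
  simp [assoc, oR_mul', smul_mul']

theorem assoc_oR₂ (r : ℝ) (a c : Oct) : assoc a (oR r) c = 0 := by
  simp [assoc, oR_mul', mul_oR', mul_smul'', smul_mul']

theorem assoc_oR₃ (r : ℝ) (a b : Oct) : assoc a b (oR r) = 0 := by
  simp [assoc, mul_oR', mul_smul'']

theorem alt₁ (x z : Oct) : assoc x x z = 0 := by
  have hx : oR (otr x) - conj x = x := by rw [conj_eq']; abel
  have key1 : ∀ u : Oct, u = oR (otr x) - conj x → u * (x * z) = otr x • (x * z) - Nc x • z := by
    intro u hu; rw [hu, sub_mul, oR_mul', KA1]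
  have key2 : ∀ u : Oct, u = oR (otr x) - conj x → (u * x) * z = otr x • (x * z) - Nc x • z := by
    intro u hu
    rw [hu, sub_mul, oR_mul', conj_mul_self', sub_mul, smul_mul', oR_mul']
  rw [assoc, key1 x hx.symm, key2 x hx.symm, sub_self]

theorem alt₂ (z x : Oct) : assoc z x x = 0 := by
  have hx : oR (otr x) - conj x = x := by rw [conj_eq']; abel
  have key1 : ∀ u : Oct, u = oR (otr x) - conj x → (z * x) * u = otr x • (z * x) - Nc x • z := by
    intro u hu; rw [hu, mul_sub, mul_oR', KA2]
  have key2 : ∀ u : Oct, u = oR (otr x) - conj x → z * (x * u) = otr x • (z * x) - Nc x • z := by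
    intro u hu
    rw [hu, mul_sub, mul_oR', mul_conj_self', mul_sub, mul_smul'', mul_oR']
  rw [assoc, key1 x hx.symm, key2 x hx.symm, sub_self]

theorem swap₁₂ (a b c : Oct) : assoc a b c = - assoc b a c := by
  have h := alt₁ (a + b) c
  rw [assoc_add₁, assoc_add₂, assoc_add₂, alt₁, alt₁] at h
  have h' : assoc a b c + assoc b a c = 0 := by
    rw [← h]; abel
  exact eq_neg_of_add_eq_zero_left h'

theorem swap₂₃ (a b c : Oct) : assoc a b c = - assoc a c b := by
  have h := alt₂ a (b + c)
  rw [assoc_add₂, assoc_add₃, assoc_add₃, alt₂, alt₂] at h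
  have h' : assoc a b c + assoc a c b = 0 := by
    rw [← h]; abel
  exact eq_neg_of_add_eq_zero_left h'

theorem cyc (a b c : Oct) : assoc a b c = assoc c a b :=
  (swap₂₃ a b c).trans (swap₁₂ c a b).symm

theorem fiveid (a b c d : Oct) :
    assoc (a * b) c d - assoc a (b * c) d + assoc a b (c * d) =
      a * assoc b c d + assoc a b c * d := by
  simp only [assoc, mul_sub, sub_mul, mul_add, add_mul]; abel

theorem comm' (u v : Oct) :
    v * u = otr u • v + otr v • u + oR (otr (u * v) - otr u * otr v) - u * v := by
  have h : v * u = conj (conj u * conj v) := by rw [conj_mul', conj_conj', conj_conj']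
  have e : conj u * conj v =
      oR (otr u * otr v) - otr u • v - otr v • u + u * v := by
    rw [conj_eq' u, conj_eq' v, sub_mul, mul_sub, mul_sub, oR_mul_oR, oR_mul', mul_oR']
    abel
  rw [h, e]
  rw [conj_add', conj_sub', conj_sub', conj_oR', conj_smul', conj_smul', conj_eq' u,
    conj_eq' v, conj_eq' (u * v), smul_sub, smul_sub, smul_oR, smul_oR, oR_sub']
  rw [mul_comm (otr v) (otr u)]
  abel

theorem D1 (u v : Oct) : assoc u (u * v) v = 0 := by
  have h := fiveid u u v v
  rw [alt₂ (u * u) v, alt₁ u (v * v), alt₂ u v, alt₁ u v, mul_zero, zero_mul, add_zero] at h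
  have : assoc u (u * v) v = 0 - (0 - assoc u (u * v) v + 0) := by abel
  rw [this, h]; abel

theorem D2 (u v : Oct) : assoc u (v * u) v = 0 := by
  rw [comm' u v, assoc_sub₂, assoc_add₂, assoc_add₂, assoc_smul₂, assoc_smul₂,
    assoc_oR₂, alt₂ u v, alt₁ u v, D1]
  simp

theorem D3 (u v : Oct) : assoc (u * v) u v = 0 := by
  have h := fiveid u v u v
  rw [D2 u v, cyc u v (u * v)] at h
  rw [show assoc v u v = (0 : Oct) by rw [swap₁₂ v u v, alt₂ u v, neg_zero]] at h
  rw [show assoc u v u = (0 : Oct) by rw [swap₂₃ u v u, alt₁ u v, neg_zero]] at h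
  rw [mul_zero, zero_mul, add_zero, sub_zero] at h
  have h2 : (2 : ℝ) • assoc (u * v) u v = 0 := by
    rw [two_smul, ← h]
  have h4 : assoc (u * v) u v = (2 : ℝ)⁻¹ • ((2 : ℝ) • assoc (u * v) u v) := by
    rw [smul_smul]; norm_num
  rw [h4, h2, smul_zero]

theorem G4 (a x y w v : Oct) (μ : ℝ) (h1 : x * w = a * y)
    (h2 : a * x = otr a • x - y * v) (hyv : y * v = y * w - μ • y) :
    otr y • assoc a x w = y * assoc a x w + assoc a x y * w := by
  have h5 := fiveid y a x w
  rw [h1] at h5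
  have e3 : assoc y a (a * y) = 0 := by
    rw [swap₁₂ y a (a * y), cyc a y (a * y), D3 a y, neg_zero]
  have e2 : assoc y (a * x) w = otr a • assoc y x w := by
    rw [h2, assoc_sub₂, assoc_smul₂, hyv, assoc_sub₂, assoc_smul₂, D1 y w, alt₁ y w]
    simp
  have e1 : assoc (y * a) x w =
      otr a • assoc y x w + otr y • assoc a x w - assoc (a * y) x w := by
    rw [comm' a y, assoc_sub₁, assoc_add₁, assoc_add₁, assoc_smul₁, assoc_smul₁, assoc_oR₁]
    abel
  have e4 : assoc (a * y) x w = 0 := by rw [← h1]; exact D3 x w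
  have e5 : assoc y a x = assoc a x y := (cyc a x y).symm
  rw [e1, e2, e3, e4, e5] at h5
  have : otr y • assoc a x w =
      otr a • assoc y x w + otr y • assoc a x w - 0 - otr a • assoc y x w + 0 := by abel
  rw [this, h5]

theorem master (a x y w v : Oct) (μ : ℝ) (h1 : x * w = a * y)
    (h2c : conj a * x = y * v) (hv : v = w - oR μ) :
    Nc y • (v * w - oR (Nc a)) = assoc (conj a) x y * w := by
  have hyv : y * v = y * w - μ • y := by rw [hv, mul_sub, mul_oR']
  have h2 : a * x = otr a • x - y * v := by
    rw [← h2c, conj_eq' a, sub_mul, oR_mul']; abel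
  have hyvw : assoc y v w = 0 := by
    rw [hv, assoc_sub₂, alt₂ y w, assoc_oR₂]; simp
  have hyv2 : (y * v) * w = y * (v * w) := by
    rw [assoc] at hyvw; exact sub_eq_zero.mp hyvw
  have E1 : y * (v * w - oR (Nc a)) = assoc (conj a) x w := by
    calc y * (v * w - oR (Nc a)) = y * (v * w) - y * oR (Nc a) := by rw [mul_sub]
      _ = (y * v) * w - Nc a • y := by rw [hyv2, mul_oR']
      _ = (conj a * x) * w - conj a * (x * w) := by rw [h2c, h1, KA1]
      _ = assoc (conj a) x w := by rw [assoc]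
  have cAw : assoc (conj a) x w = - assoc a x w := by
    rw [conj_eq' a, assoc_sub₁, assoc_oR₁, zero_sub]
  have cAy : assoc (conj a) x y = - assoc a x y := by
    rw [conj_eq' a, assoc_sub₁, assoc_oR₁, zero_sub]
  have g4 := G4 a x y w v μ h1 h2 hyv
  calc Nc y • (v * w - oR (Nc a))
      = conj y * (y * (v * w - oR (Nc a))) := (KA1 y _).symm
    _ = conj y * assoc (conj a) x w := by rw [E1]
    _ = (oR (otr y) - y) * assoc (conj a) x w := by rw [← conj_eq']
    _ = otr y • assoc (conj a) x w - y * assoc (conj a) x w := by rw [sub_mul, oR_mul']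
    _ = -(otr y • assoc a x w) + y * assoc a x w := by
        rw [cAw, smul_neg, mul_neg]; abel
    _ = -(y * assoc a x w + assoc a x y * w) + y * assoc a x w := by rw [g4]
    _ = (- assoc a x y) * w := by rw [neg_mul]; abel
    _ = assoc (conj a) x y * w := by rw [cAy]

end Oct

open Oct in
theorem stmt6_aux (p m : ℝ) (a : Oct) (x y lam : Oct) (hx : x ≠ 0) (hy : y ≠ 0)
    (h0 : oR p * x + a * y = x * lam) (h1r : conj a * x + oR m * y = y * lam) :
    lam * lam - lam * oR (p + m) + oR (p * m - onorm a ^ 2) =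
        (onorm y ^ 2)⁻¹ • (assoc (conj a) x y * (lam - oR p)) ∧
      lam * lam - lam * oR (p + m) + oR (p * m - onorm a ^ 2) =
        (onorm x ^ 2)⁻¹ • (assoc a y x * (lam - oR m)) := by
  rw [oR_mul'] at h0 h1r
  have hxw : x * (lam - oR p) = a * y := by
    rw [mul_sub, mul_oR', ← h0]; abel
  have hax : conj a * x = y * (lam - oR m) := by
    rw [mul_sub, mul_oR', ← h1r]; abel
  have hv : (lam - oR m) = (lam - oR p) - oR (m - p) := by rw [oR_sub']; abel
  have hv2 : (lam - oR p) = (lam - oR m) - oR (p - m) := by rw [oR_sub']; abel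
  have key1 := master a x y (lam - oR p) (lam - oR m) (m - p) hxw hax hv
  have key2 := master (conj a) y x (lam - oR m) (lam - oR p) (p - m)
    hax.symm (by rw [conj_conj']; exact hxw.symm) hv2
  rw [Nc_conj, conj_conj'] at key2
  have expand1 : (lam - oR m) * (lam - oR p) - oR (Nc a) =
      lam * lam - lam * oR (p + m) + oR (p * m - onorm a ^ 2) := by
    rw [onorm_sq a, sub_mul, mul_sub, mul_sub, mul_oR', oR_mul', oR_mul_oR,
      mul_oR', add_smul, oR_sub', mul_comm m p]
    abel
  have expand2 : (lam - oR p) * (lam - oR m) - oR (Nc a) =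
      lam * lam - lam * oR (p + m) + oR (p * m - onorm a ^ 2) := by
    rw [onorm_sq a, sub_mul, mul_sub, mul_sub, mul_oR', oR_mul', oR_mul_oR,
      mul_oR', add_smul, oR_sub', mul_comm p m]
    abel
  constructor
  · rw [onorm_sq y, ← key1, smul_smul, inv_mul_cancel₀ (Nc_ne_zero hy), one_smul]
    exact expand1.symm
  · rw [onorm_sq x, ← key2, smul_smul, inv_mul_cancel₀ (Nc_ne_zero hx), one_smul]
    exact expand2.symm

/-- generalized characteristic equation
`λ² − λ(tr A) + det A = [ā, x, y](λ − p)/|y|² = [a, y, x](λ − m)/|x|²`. -/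
theorem stmt_6 (p m : ℝ) (a : Oct) (A : Matrix (Fin 2) (Fin 2) Oct)
    (hA : A = herm2 p m a) (x y lam : Oct) (hx : x ≠ 0) (hy : y ≠ 0)
    (heig : A.mulVec ![x, y] = fun i => ![x, y] i * lam) :
    lam * lam - lam * oR (p + m) + oR (p * m - onorm a ^ 2) =
        (onorm y ^ 2)⁻¹ • (assoc (conj a) x y * (lam - oR p)) ∧
      lam * lam - lam * oR (p + m) + oR (p * m - onorm a ^ 2) =
        (onorm x ^ 2)⁻¹ • (assoc a y x * (lam - oR m)) := by
  subst hA
  have h0 := congrFun heig 0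
  have h1r := congrFun heig 1
  simp only [herm2, Matrix.mulVec, dotProduct, Fin.sum_univ_two, Matrix.cons_val',
    Matrix.cons_val_zero, Matrix.cons_val_one, Matrix.head_cons, Matrix.empty_val',
    Matrix.cons_val_fin_one, Matrix.head_fin_const, Matrix.of_apply] at h0 h1r
  exact stmt6_aux p m a x y lam hx hy h0 h1r
end
end
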